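/- Let N ≥ 1. The linear span of the set { h_K|_{S^{N-1}} : K ⊆ ℝ^N nonempty compact convex } of restrictions of support functions to the unit sphere is dense in C(S^{N-1}, ℝ) with the supremum norm; equivalently, every continuous real function on S^{N-1} is the uniform limit of differences h_K|_{S^{N-1}} − h_L|_{S^{N-1}} of restricted support functions of nonempty compact convex sets K, L ⊆ ℝ^N. -/

import Mathlib

/-- The unit sphere `S^{N-1}` of Euclidean space `ℝ^N`. -/
abbrev UnitSphere (N : ℕ) : Set (EuclideanSpace ℝ (Fin N)) :=
  Metric.sphere (0 : EuclideanSpace ℝ (Fin N)) 1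

/-- The support function `h_K(z) = sup_{x ∈ K} ⟪x, z⟫` of a set `K ⊆ ℝ^N`. -/
noncomputable def suppFn {N : ℕ} (K : Set (EuclideanSpace ℝ (Fin N)))
    (z : EuclideanSpace ℝ (Fin N)) : ℝ :=
  sSup ((fun x => (inner ℝ x z : ℝ)) '' K)

/-- The set of restrictions to the unit sphere of support functions of nonempty compact
convex subsets of `ℝ^N`, viewed inside `C(S^{N-1}, ℝ)`. -/
def restrictedSuppFns (N : ℕ) : Set C(UnitSphere N, ℝ) :=
  {g | ∃ K : Set (EuclideanSpace ℝ (Fin N)), K.Nonempty ∧ IsCompact K ∧ Convex ℝ K ∧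
    ∀ z : UnitSphere N, g z = suppFn K (z : EuclideanSpace ℝ (Fin N))}

/-!
Support functions of nonempty compact convex sets are closed under Minkowski sums
(`h_{K+L} = h_K + h_L`), nonnegative dilations, and joins (`h_{conv(K ∪ L)} = max h_K h_L`).
Hence they form a convex cone closed under `⊔`, whose linear span consists of differences and is
therefore a vector sublattice of `C(S^{N-1}, ℝ)`. It contains the constants (unit ball) and the
linear functionals (singletons), which separate points, so the lattice version of the
Stone–Weierstrass theorem on the compact sphere applies.
-/

open scoped RealInnerProductSpace Pointwise

theorem IsCompact.convexJoin {E : Type*} [AddCommGroup E] [Module ℝ E] [TopologicalSpace E]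
    [IsTopologicalAddGroup E] [ContinuousSMul ℝ E] {s t : Set E} (hs : IsCompact s)
    (ht : IsCompact t) : IsCompact (convexJoin ℝ s t) := by
  have : _root_.convexJoin ℝ s t = (fun p : ℝ × E × E => (1 - p.1) • p.2.1 + p.1 • p.2.2) ''
      (Set.Icc 0 1 ×ˢ s ×ˢ t) := by
    ext w
    simp only [mem_convexJoin, segment_eq_image, Set.mem_image, Set.mem_prod, Prod.exists]
    aesop
  rw [this]
  exact (isCompact_Icc.prod (hs.prod ht)).image (by fun_prop)

section SuppFn

variable {N : ℕ} {K L : Set (EuclideanSpace ℝ (Fin N))}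

theorem inner_le_suppFn (hK : IsCompact K) {x : EuclideanSpace ℝ (Fin N)} (hx : x ∈ K)
    (z : EuclideanSpace ℝ (Fin N)) : ⟪x, z⟫ ≤ suppFn K z :=
  le_csSup (hK.image (by fun_prop)).bddAbove (Set.mem_image_of_mem _ hx)

theorem suppFn_le (hK : K.Nonempty) {z : EuclideanSpace ℝ (Fin N)} {c : ℝ}
    (h : ∀ x ∈ K, ⟪x, z⟫ ≤ c) : suppFn K z ≤ c :=
  csSup_le (hK.image _) (Set.forall_mem_image.mpr h)

theorem IsCompact.exists_suppFn_eq_inner (hK : IsCompact K) (hne : K.Nonempty)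
    (z : EuclideanSpace ℝ (Fin N)) : ∃ x ∈ K, suppFn K z = ⟪x, z⟫ :=
  hK.exists_sSup_image_eq hne (by fun_prop)

theorem suppFn_mono (hL : IsCompact L) (hK : K.Nonempty) (h : K ⊆ L)
    (z : EuclideanSpace ℝ (Fin N)) : suppFn K z ≤ suppFn L z :=
  suppFn_le hK fun _ hx => inner_le_suppFn hL (h hx) z

theorem suppFn_singleton (x z : EuclideanSpace ℝ (Fin N)) : suppFn {x} z = ⟪x, z⟫ := by
  simp [suppFn]

theorem suppFn_closedBall_one {z : EuclideanSpace ℝ (Fin N)} (hz : ‖z‖ = 1) :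
    suppFn (Metric.closedBall 0 1) z = 1 := by
  apply le_antisymm
  · refine suppFn_le ⟨0, by simp⟩ fun x hx => ?_
    calc ⟪x, z⟫ ≤ ‖x‖ * ‖z‖ := real_inner_le_norm x z
      _ ≤ 1 := by rw [hz, mul_one]; simpa using hx
  · have hz_mem : z ∈ Metric.closedBall (0 : EuclideanSpace ℝ (Fin N)) 1 := by simp [hz]
    simpa [real_inner_self_eq_norm_sq, hz] using
      inner_le_suppFn (isCompact_closedBall 0 1) hz_mem z

theorem suppFn_add (hK : IsCompact K) (hKne : K.Nonempty) (hL : IsCompact L)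
    (hLne : L.Nonempty) (z : EuclideanSpace ℝ (Fin N)) :
    suppFn (K + L) z = suppFn K z + suppFn L z := by
  apply le_antisymm
  · refine suppFn_le (hKne.add hLne) ?_
    rintro _ ⟨a, ha, b, hb, rfl⟩
    rw [inner_add_left]
    exact add_le_add (inner_le_suppFn hK ha z) (inner_le_suppFn hL hb z)
  · obtain ⟨a, ha, hKa⟩ := hK.exists_suppFn_eq_inner hKne z
    obtain ⟨b, hb, hLb⟩ := hL.exists_suppFn_eq_inner hLne z
    rw [hKa, hLb, ← inner_add_left]
    exact inner_le_suppFn (hK.add hL) (Set.add_mem_add ha hb) z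

theorem suppFn_smul (hK : IsCompact K) (hKne : K.Nonempty) {c : ℝ} (hc : 0 ≤ c)
    (z : EuclideanSpace ℝ (Fin N)) : suppFn (c • K) z = c * suppFn K z := by
  apply le_antisymm
  · refine suppFn_le hKne.smul_set ?_
    rintro _ ⟨a, ha, rfl⟩
    rw [real_inner_smul_left]
    exact mul_le_mul_of_nonneg_left (inner_le_suppFn hK ha z) hc
  · obtain ⟨a, ha, hKa⟩ := hK.exists_suppFn_eq_inner hKne z
    rw [hKa, ← real_inner_smul_left]
    exact inner_le_suppFn (hK.smul c) (Set.smul_mem_smul_set ha) z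

theorem suppFn_convexJoin (hK : IsCompact K) (hKne : K.Nonempty) (hL : IsCompact L)
    (hLne : L.Nonempty) (z : EuclideanSpace ℝ (Fin N)) :
    suppFn (convexJoin ℝ K L) z = max (suppFn K z) (suppFn L z) := by
  have hJ := hK.convexJoin hL
  apply le_antisymm
  · refine suppFn_le (hKne.mono (subset_convexJoin_left hLne)) fun w hw => ?_
    refine convexJoin_subset (u := {x | ⟪x, z⟫ ≤ max (suppFn K z) (suppFn L z)})
      (fun x hx => ?_) (fun x hx => ?_) (convex_halfSpace_le ?_ _) hw
    · exact (inner_le_suppFn hK hx z).trans (le_max_left _ _)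
    · exact (inner_le_suppFn hL hx z).trans (le_max_right _ _)
    · exact (innerₛₗ ℝ |>.flip z).isLinear
  · exact max_le (suppFn_mono hJ hKne (subset_convexJoin_left hLne) z)
      (suppFn_mono hJ hLne (subset_convexJoin_right hKne) z)

end SuppFn

section Span

variable {E : Type*} [AddCommGroup E] [Module ℝ E]

theorem PointedCone.mem_span_iff_exists_sub (C : PointedCone ℝ E) {x : E} :
    x ∈ Submodule.span ℝ (C : Set E) ↔ ∃ a ∈ C, ∃ b ∈ C, a - b = x := by
  refine ⟨fun hx => ?_, fun ⟨a, ha, b, hb, hab⟩ => hab ▸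
    sub_mem (Submodule.subset_span ha) (Submodule.subset_span hb)⟩
  induction hx using Submodule.span_induction with
  | mem x hx => exact ⟨x, hx, 0, C.zero_mem, sub_zero x⟩
  | zero => exact ⟨0, C.zero_mem, 0, C.zero_mem, sub_zero 0⟩
  | add x y _ _ hx hy =>
    obtain ⟨a, ha, b, hb, rfl⟩ := hx
    obtain ⟨c, hc, d, hd, rfl⟩ := hy
    exact ⟨a + c, C.add_mem ha hc, b + d, C.add_mem hb hd, add_sub_add_comm a c b d⟩
  | smul r x _ hx =>
    obtain ⟨a, ha, b, hb, rfl⟩ := hx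
    rcases le_total 0 r with hr | hr
    · exact ⟨r • a, C.smul_mem hr ha, r • b, C.smul_mem hr hb, (smul_sub r a b).symm⟩
    · refine ⟨(-r) • b, C.smul_mem (neg_nonneg.mpr hr) hb,
        (-r) • a, C.smul_mem (neg_nonneg.mpr hr) ha, ?_⟩
      rw [← smul_sub, neg_smul, ← smul_neg, neg_sub]

variable [Lattice E] [IsOrderedAddMonoid E]

/-- Differences commute with `⊔` up to a common shift:
`(a - b) ⊔ (c - d) = ((a + d) ⊔ (c + b)) - (b + d)`. -/
theorem PointedCone.sup_mem_span (C : PointedCone ℝ E) (hC : ∀ a ∈ C, ∀ b ∈ C, a ⊔ b ∈ C)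
    {x y : E} (hx : x ∈ Submodule.span ℝ (C : Set E)) (hy : y ∈ Submodule.span ℝ (C : Set E)) :
    x ⊔ y ∈ Submodule.span ℝ (C : Set E) := by
  obtain ⟨a, ha, b, hb, rfl⟩ := C.mem_span_iff_exists_sub.mp hx
  obtain ⟨c, hc, d, hd, rfl⟩ := C.mem_span_iff_exists_sub.mp hy
  refine C.mem_span_iff_exists_sub.mpr
    ⟨(a + d) ⊔ (c + b), hC _ (C.add_mem ha hd) _ (C.add_mem hc hb), b + d, C.add_mem hb hd, ?_⟩
  rw [sup_sub]
  congr 1 <;> abel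

theorem PointedCone.inf_mem_span (C : PointedCone ℝ E) (hC : ∀ a ∈ C, ∀ b ∈ C, a ⊔ b ∈ C)
    {x y : E} (hx : x ∈ Submodule.span ℝ (C : Set E)) (hy : y ∈ Submodule.span ℝ (C : Set E)) :
    x ⊓ y ∈ Submodule.span ℝ (C : Set E) := by
  simpa [neg_sup] using neg_mem (C.sup_mem_span hC (neg_mem hx) (neg_mem hy))

end Span

theorem Submodule.separatesPointsStrongly {X 𝕜 : Type*} [TopologicalSpace X] [Field 𝕜]
    [TopologicalSpace 𝕜] [IsTopologicalRing 𝕜] (V : Submodule 𝕜 C(X, 𝕜)) (hV : 1 ∈ V)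
    (hsep : ∀ x y : X, x ≠ y → ∃ f ∈ V, f x ≠ f y) : (V : Set C(X, 𝕜)).SeparatesPointsStrongly := by
  intro v x y
  by_cases hxy : x = y
  · subst hxy
    exact ⟨v x • 1, V.smul_mem _ hV, by simp, by simp⟩
  obtain ⟨f, hf, hfxy⟩ := hsep x y hxy
  have hfxy' : f x - f y ≠ 0 := sub_ne_zero_of_ne hfxy
  refine ⟨((v y - v x) * (f x - f y)⁻¹) • (f x • 1 - f) + v x • 1,
    V.add_mem (V.smul_mem _ (V.sub_mem (V.smul_mem _ hV) hf)) (V.smul_mem _ hV), ?_, ?_⟩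
  · simp
  · simp [inv_mul_cancel_right₀ hfxy']

section Cone

variable {N : ℕ}

def suppFnCone (N : ℕ) : PointedCone ℝ C(UnitSphere N, ℝ) where
  carrier := restrictedSuppFns N
  zero_mem' := ⟨{0}, Set.singleton_nonempty 0, isCompact_singleton, convex_singleton 0,
    fun z => by simp [suppFn_singleton]⟩
  add_mem' := by
    rintro f g ⟨K, hKne, hKc, hKv, hK⟩ ⟨L, hLne, hLc, hLv, hL⟩
    refine ⟨K + L, hKne.add hLne, hKc.add hLc, hKv.add hLv, fun z => ?_⟩
    rw [ContinuousMap.add_apply, hK z, hL z, suppFn_add hKc hKne hLc hLne]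
  smul_mem' := by
    rintro ⟨c, hc⟩ f ⟨K, hKne, hKc, hKv, hK⟩
    refine ⟨c • K, hKne.smul_set, hKc.smul c, hKv.smul c, fun z => ?_⟩
    rw [suppFn_smul hKc hKne hc, ← hK z]
    rfl

theorem coe_suppFnCone : (suppFnCone N : Set C(UnitSphere N, ℝ)) = restrictedSuppFns N := rfl

theorem sup_mem_restrictedSuppFns {f g : C(UnitSphere N, ℝ)} (hf : f ∈ restrictedSuppFns N)
    (hg : g ∈ restrictedSuppFns N) : f ⊔ g ∈ restrictedSuppFns N := by
  obtain ⟨K, hKne, hKc, hKv, hK⟩ := hf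
  obtain ⟨L, hLne, hLc, hLv, hL⟩ := hg
  refine ⟨convexJoin ℝ K L, hKne.mono (subset_convexJoin_left hLne), hKc.convexJoin hLc,
    hKv.convexJoin hLv, fun z => ?_⟩
  rw [suppFn_convexJoin hKc hKne hLc hLne, ContinuousMap.sup_apply, hK z, hL z]

theorem one_mem_restrictedSuppFns : (1 : C(UnitSphere N, ℝ)) ∈ restrictedSuppFns N :=
  ⟨Metric.closedBall 0 1, ⟨0, by simp⟩, isCompact_closedBall 0 1, convex_closedBall 0 1,
    fun z => (suppFn_closedBall_one (mem_sphere_zero_iff_norm.mp z.2)).symm⟩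

theorem restrictedSuppFns_separatesPoints {x y : UnitSphere N} (hxy : x ≠ y) :
    ∃ f ∈ restrictedSuppFns N, f x ≠ f y := by
  obtain ⟨w, hw⟩ : ∃ w, ⟪w, (x : EuclideanSpace ℝ (Fin N))⟫ ≠ ⟪w, (y : EuclideanSpace ℝ (Fin N))⟫ :=
    not_forall.mp (mt (ext_inner_left ℝ) (Subtype.coe_injective.ne hxy))
  exact ⟨⟨fun z => ⟪w, (z : EuclideanSpace ℝ (Fin N))⟫, by fun_prop⟩,
    ⟨{w}, Set.singleton_nonempty w, isCompact_singleton, convex_singleton w,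
      fun z => (suppFn_singleton w z).symm⟩, hw⟩

end Cone

theorem span_restrictedSuppFns_dense {N : ℕ} :
    Dense (↑(Submodule.span ℝ (restrictedSuppFns N)) : Set C(UnitSphere N, ℝ)) := by
  have hsup : ∀ f ∈ suppFnCone N, ∀ g ∈ suppFnCone N, f ⊔ g ∈ suppFnCone N :=
    fun _ hf _ hg => sup_mem_restrictedSuppFns hf hg
  rw [← coe_suppFnCone, dense_iff_closure_eq, ← Set.top_eq_univ]
  refine ContinuousMap.sublattice_closure_eq_top _ ⟨0, zero_mem _⟩
    (fun _ hf _ hg => (suppFnCone N).inf_mem_span hsup hf hg)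
    (fun _ hf _ hg => (suppFnCone N).sup_mem_span hsup hf hg)
    (Submodule.separatesPointsStrongly _ (Submodule.subset_span one_mem_restrictedSuppFns)
      fun _ _ hxy => ?_)
  obtain ⟨f, hf, hfxy⟩ := restrictedSuppFns_separatesPoints hxy
  exact ⟨f, Submodule.subset_span hf, hfxy⟩
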